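/- Let F be the free group on alpha_0, ..., alpha_N with the twist automorphisms T_j as above (T_j(alpha_{j-1}) = alpha_{j-1} alpha_j^{-1} alpha_{j-1}, T_j(alpha_j) = alpha_{j-1}, identity on other generators). Fix g with 2g <= N - 1, signs epsilon_1, ..., epsilon_{2g} in {+1, -1}, and set phi = T_1^{epsilon_1} ∘ T_2^{epsilon_2} ∘ ... ∘ T_{2g}^{epsilon_{2g}}. Then for every i with 0 <= i <= 2g - 1, there exist elements u, v in the subgroup generated by alpha_0, ..., alpha_i and a sign delta in {+1, -1} such that phi(alpha_i) = u * alpha_{i+1}^{delta} * v. -/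
import Mathlib

private lemma aux_mapsto {G : Type*} [Group G] (e : MulAut G) (S : Set G)
    (h : ∀ x ∈ S, e x ∈ Subgroup.closure S) :
    ∀ x ∈ Subgroup.closure S, e x ∈ Subgroup.closure S := by
  intro x hx
  have hle : (Subgroup.closure S).map e.toMonoidHom ≤ Subgroup.closure S := by
    rw [MonoidHom.map_closure]
    exact Subgroup.closure_le _ |>.2 (by rintro y ⟨z, hz, rfl⟩; exact h z hz)
  exact hle ⟨x, hx, rfl⟩

private lemma aux_list {G : Type*} [Group G] (L : List (MulAut G)) (H : Subgroup G) (y : G)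
    (h : ∀ e ∈ L, (∀ x ∈ H, e x ∈ H) ∧ e y = y) :
    (∀ x ∈ H, L.prod x ∈ H) ∧ L.prod y = y := by
  induction L with
  | nil => simp
  | cons a t ih =>
    have ha := h a (by simp)
    have ht := ih (fun e he => h e (by simp [he]))
    constructor
    · intro x hx
      rw [List.prod_cons, MulAut.mul_apply]
      exact ha.1 _ (ht.1 x hx)
    · rw [List.prod_cons, MulAut.mul_apply, ht.2, ha.2]

private lemma aux_fix {G : Type*} [Group G] (L : List (MulAut G)) (y : G)
    (h : ∀ e ∈ L, e y = y) : L.prod y = y := by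
  induction L with
  | nil => simp
  | cons a t ih =>
    rw [List.prod_cons, MulAut.mul_apply, ih (fun e he => h e (by simp [he])), h a (by simp)]

private lemma aux_zpow_fix {G : Type*} [Group G] (e : MulAut G) (y : G) (d : ℤ)
    (hd : d = 1 ∨ d = -1) (h : e y = y) : (e ^ d) y = y := by
  rcases hd with rfl | rfl
  · simpa using h
  · rw [zpow_neg_one]
    conv_lhs => rw [← h]
    exact e.symm_apply_apply y

/-- For the two-bridge monodromy `φ = T_1^{ε_1} ∘ ⋯ ∘ T_{2g}^{ε_{2g}}` acting on the free
group on `α_0, …, α_N` (with `2g ≤ N - 1`), the image `φ(α_i)` for `0 ≤ i ≤ 2g - 1` is a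
word `u * α_{i+1}^{δ} * v` with `u, v` in the subgroup generated by `α_0, …, α_i` and
`δ ∈ {±1}`. -/
theorem stmt_7 (N g : ℕ) (hg : 2 * g + 1 ≤ N)
    (T : ℕ → MulAut (FreeGroup (Fin (N + 1))))
    (hT : ∀ (j : ℕ) (hj1 : 1 ≤ j) (hjN : j ≤ N),
      T j (FreeGroup.of ⟨j - 1, by omega⟩) =
        FreeGroup.of ⟨j - 1, by omega⟩ * (FreeGroup.of ⟨j, by omega⟩)⁻¹ *
          FreeGroup.of ⟨j - 1, by omega⟩ ∧
      T j (FreeGroup.of ⟨j, by omega⟩) = FreeGroup.of ⟨j - 1, by omega⟩ ∧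
      ∀ i : Fin (N + 1), (i : ℕ) ≠ j - 1 → (i : ℕ) ≠ j →
        T j (FreeGroup.of i) = FreeGroup.of i)
    (ε : ℕ → ℤ) (hε : ∀ i, ε i = 1 ∨ ε i = -1) :
    ∀ (i : ℕ) (hi : i < 2 * g),
      ∃ u v, u ∈ Subgroup.closure (FreeGroup.of '' {x : Fin (N + 1) | (x : ℕ) ≤ i}) ∧
        v ∈ Subgroup.closure (FreeGroup.of '' {x : Fin (N + 1) | (x : ℕ) ≤ i}) ∧
        ∃ δ : ℤ, (δ = 1 ∨ δ = -1) ∧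
          (((List.range (2 * g)).map fun l => T (l + 1) ^ ε (l + 1)).prod :
              MulAut (FreeGroup (Fin (N + 1)))) (FreeGroup.of ⟨i, by omega⟩) =
            u * (FreeGroup.of ⟨i + 1, by omega⟩) ^ δ * v := by
  intro i hi
  set f : ℕ → MulAut (FreeGroup (Fin (N + 1))) := fun l => T (l + 1) ^ ε (l + 1) with hf
  set S : Set (FreeGroup (Fin (N + 1))) :=
    FreeGroup.of '' {x : Fin (N + 1) | (x : ℕ) ≤ i} with hS
  set H := Subgroup.closure S with hH
  have hiN : i + 1 ≤ N := by omega
  set αi : FreeGroup (Fin (N + 1)) := FreeGroup.of ⟨i, by omega⟩ with hαi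
  set αi1 : FreeGroup (Fin (N + 1)) := FreeGroup.of ⟨i + 1, by omega⟩ with hαi1
  -- generator membership
  have hgen : ∀ (k : ℕ) (hk : k ≤ i), (FreeGroup.of ⟨k, by omega⟩ : FreeGroup (Fin (N+1))) ∈ H :=
    fun k hk => Subgroup.subset_closure ⟨⟨k, by omega⟩, hk, rfl⟩
  -- split the range
  have hsplit : List.range (2 * g) =
      List.range i ++ i :: (List.range (2 * g - (i + 1))).map ((i + 1) + ·) := by
    have h2 : 2 * g = (i + 1) + (2 * g - (i + 1)) := by omega
    rw [h2, List.range_add, List.range_succ]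
    simp
  -- the tail fixes α_i
  have htail : (((List.range (2 * g - (i + 1))).map ((i + 1) + ·)).map f).prod αi = αi := by
    apply aux_fix
    intro e he
    simp only [List.mem_map, List.mem_range] at he
    obtain ⟨k, hk, rfl⟩ := he
    obtain ⟨a, ha, rfl⟩ := hk
    simp only [hf]
    set j : ℕ := i + 1 + a + 1 with hj
    have hjN : j ≤ N := by omega
    apply aux_zpow_fix _ _ _ (hε j)
    exact (hT j (by omega) hjN).2.2 ⟨i, by omega⟩ (by simp [hj]; omega) (by simp [hj]; omega)
  -- the head preserves H and fixes α_{i+1}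
  have hhead : (∀ x ∈ H, ((List.range i).map f).prod x ∈ H) ∧
      ((List.range i).map f).prod αi1 = αi1 := by
    apply aux_list
    intro e he
    simp only [List.mem_map, List.mem_range] at he
    obtain ⟨l, hl, rfl⟩ := he
    set j : ℕ := l + 1 with hj
    have hj1 : 1 ≤ j := by omega
    have hji : j ≤ i := by omega
    have hjN : j ≤ N := by omega
    obtain ⟨h1, h2, h3⟩ := hT j hj1 hjN
    -- T j fixes α_{i+1}
    have hfixT : T j αi1 = αi1 := h3 ⟨i + 1, by omega⟩ (by simp; omega) (by simp; omega)
    -- T j ⁻¹ values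
    have hinv1 : (T j)⁻¹ (FreeGroup.of ⟨j - 1, by omega⟩ : FreeGroup (Fin (N+1))) =
        FreeGroup.of ⟨j, by omega⟩ := by
      conv_lhs => rw [← h2]
      exact (T j).symm_apply_apply _
    have hinv2 : (T j)⁻¹ (FreeGroup.of ⟨j, by omega⟩ : FreeGroup (Fin (N+1))) =
        FreeGroup.of ⟨j, by omega⟩ * (FreeGroup.of ⟨j - 1, by omega⟩)⁻¹ *
          FreeGroup.of ⟨j, by omega⟩ := by
      have : T j (FreeGroup.of ⟨j, by omega⟩ * (FreeGroup.of ⟨j - 1, by omega⟩)⁻¹ *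
          FreeGroup.of ⟨j, by omega⟩ : FreeGroup (Fin (N+1))) = FreeGroup.of ⟨j, by omega⟩ := by
        rw [map_mul, map_mul, map_inv, h1, h2]
        group
      conv_lhs => rw [← this]
      exact (T j).symm_apply_apply _
    have hinv3 : ∀ x : Fin (N + 1), (x : ℕ) ≠ j - 1 → (x : ℕ) ≠ j →
        (T j)⁻¹ (FreeGroup.of x) = FreeGroup.of x := by
      intro x hx1 hx2
      conv_lhs => rw [← h3 x hx1 hx2]
      exact (T j).symm_apply_apply _
    -- generator images in H (both for T j and its inverse)
    have hb1 : j - 1 < N + 1 := by omega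
    have hb2 : j < N + 1 := by omega
    have hSmem : ∀ x ∈ S, T j x ∈ H ∧ (T j)⁻¹ x ∈ H := by
      rintro x ⟨y, hy, rfl⟩
      simp only [Set.mem_setOf_eq] at hy
      by_cases hy1 : (y : ℕ) = j - 1
      · have hyeq : y = (⟨j - 1, hb1⟩ : Fin (N+1)) := Fin.ext hy1
        subst hyeq
        constructor
        · rw [h1]
          exact mul_mem (mul_mem (hgen (j-1) (by omega)) (inv_mem (hgen j hji))) (hgen (j-1) (by omega))
        · rw [hinv1]; exact hgen j hji
      · by_cases hy2 : (y : ℕ) = j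
        · have hyeq : y = (⟨j, hb2⟩ : Fin (N+1)) := Fin.ext hy2
          subst hyeq
          constructor
          · rw [h2]; exact hgen (j-1) (by omega)
          · rw [hinv2]
            exact mul_mem (mul_mem (hgen j hji) (inv_mem (hgen (j-1) (by omega)))) (hgen j hji)
        · constructor
          · rw [h3 y hy1 hy2]; exact Subgroup.subset_closure ⟨y, hy, rfl⟩
          · rw [hinv3 y hy1 hy2]; exact Subgroup.subset_closure ⟨y, hy, rfl⟩
    rcases hε j with hej | hej
    · constructor
      · simpa [hf, ← hj, hej] using aux_mapsto (T j) S (fun x hx => (hSmem x hx).1)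
      · simp only [hf, ← hj, hej, zpow_one]
        exact hfixT
    · constructor
      · simpa [hf, ← hj, hej, zpow_neg_one] using
          aux_mapsto (T j)⁻¹ S (fun x hx => (hSmem x hx).2)
      · simp only [hf, ← hj, hej, zpow_neg_one]
        conv_lhs => rw [← hfixT]
        exact (T j).symm_apply_apply _
  -- the middle factor
  obtain ⟨h1, h2, _⟩ := hT (i + 1) (by omega) hiN
  have hmid1 : T (i + 1) αi = αi * αi1⁻¹ * αi := h1
  have hmid2 : (T (i + 1))⁻¹ αi = αi1 := by
    conv_lhs => rw [show αi = T (i+1) αi1 from h2.symm]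
    exact (T (i + 1)).symm_apply_apply _
  -- assemble
  rw [hsplit]
  simp only [List.map_append, List.map_cons, List.prod_append, List.prod_cons]
  rw [MulAut.mul_apply, MulAut.mul_apply, htail]
  rcases hε (i + 1) with he | he
  · refine ⟨((List.range i).map f).prod αi, ((List.range i).map f).prod αi, 
      hhead.1 _ (hgen i le_rfl), hhead.1 _ (hgen i le_rfl), -1, Or.inr rfl, ?_⟩
    rw [show f i = T (i + 1) from by rw [hf]; simp [he], hmid1]
    rw [map_mul, map_mul, map_inv, hhead.2, zpow_neg_one]
  · refine ⟨1, 1, one_mem _, one_mem _, 1, Or.inl rfl, ?_⟩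
    rw [show f i = (T (i + 1))⁻¹ from by rw [hf]; simp [he], hmid2]
    rw [hhead.2, zpow_one, one_mul, mul_one]
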